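/- Let (V,m,σ) be a Yang–Baxter algebra and ⋈_σ the quantum quasi-shuffle product on T(V). Then for any x ∈ V^{⊗i} with i ≥ 1, the difference x₁ ⋈_σ ⋯ ⋈_σ x_r − x₁ sh_σ ⋯ sh_σ x_r lies in ⊕_{k < n} V^{⊗k}, where x_j ∈ V^{⊗i_j} and n = i₁ + ⋯ + i_r; i.e., the quantum shuffle algebra is the associated graded algebra of the quantum quasi-shuffle algebra with respect to the filtration T(V)^{[n]} = ⊕_{k ≤ n} V^{⊗k}. -/

import Mathlib

open CategoryTheory MonoidalCategory TensorProduct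
noncomputable section
universe u
variable {K : Type u} [Field K]

def Tpow (M : ModuleCat.{u} K) : ℕ → ModuleCat.{u} K
  | 0 => ModuleCat.of K K
  | n+1 => Tpow M n ⊗ M

def sigR {M : ModuleCat.{u} K} (σ : M ⊗ M ⟶ M ⊗ M) : (n k : ℕ) → (Tpow M n ⟶ Tpow M n)
  | n+2, 0 => (α_ (Tpow M n) M M).hom ≫ (Tpow M n ◁ σ) ≫ (α_ (Tpow M n) M M).inv
  | n+1, k+1 => sigR σ n k ▷ M
  | _, _ => 𝟙 _

def sigAt {M : ModuleCat.{u} K} (σ : M ⊗ M ⟶ M ⊗ M) (n i : ℕ) : Tpow M n ⟶ Tpow M n :=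
  sigR σ n (n - 1 - i)

def asc {M : ModuleCat.{u} K} (σ : M ⊗ M ⟶ M ⊗ M) (n : ℕ) : (b l : ℕ) → (Tpow M n ⟶ Tpow M n)
  | _, 0 => 𝟙 _
  | b, l+1 => sigAt σ n b ≫ asc σ n (b+1) l

def blockT {M : ModuleCat.{u} K} (σ : M ⊗ M ⟶ M ⊗ M) : (i j n : ℕ) → (Tpow M n ⟶ Tpow M n)
  | 0, _, _ => 𝟙 _
  | i+1, j, n => asc σ n (i+1) j ≫ blockT σ i j n

/-- `T(V)` as the direct sum of the tensor powers. -/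
def TT (M : ModuleCat.{u} K) : Type u := DirectSum ℕ fun n => ↥(Tpow M n)

instance (M : ModuleCat.{u} K) : AddCommGroup (TT M) := by unfold TT; infer_instance
instance (M : ModuleCat.{u} K) : Module K (TT M) := by unfold TT; infer_instance

def TTc (M : ModuleCat.{u} K) : ModuleCat.{u} K := ModuleCat.of K (TT M)

/-- the inclusion of the `n`-th tensor power into `T(V)`. -/
def iotaT (M : ModuleCat.{u} K) (n : ℕ) : Tpow M n ⟶ TTc M :=
  ModuleCat.ofHom (DirectSum.lof K ℕ (fun k => ↥(Tpow M k)) n : ↥(Tpow M n) →ₗ[K] TT M)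

/-- concatenation on the right by one tensor factor, `T(V) ⊗ V → T(V)`. -/
def concatR (M : ModuleCat.{u} K) : TTc M ⊗ M ⟶ TTc M :=
  ModuleCat.ofHom ((DirectSum.toModule K ℕ (TT M) fun n =>
      (DirectSum.lof K ℕ (fun k => ↥(Tpow M k)) (n+1) :
        ↥(Tpow M n) ⊗[K] ↥M →ₗ[K] TT M)) ∘ₗ
    (TensorProduct.directSumLeft K K (fun n => ↥(Tpow M n)) ↥M).toLinearMap :
    ↥(TTc M ⊗ M) →ₗ[K] TT M)

/-- `σ ⊗ id` on `(M ⊗ M) ⊗ M`. -/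
def w1 {M : ModuleCat.{u} K} (σ : M ⊗ M ⟶ M ⊗ M) : (M ⊗ M) ⊗ M ⟶ (M ⊗ M) ⊗ M := σ ▷ M

/-- `id ⊗ σ` on `(M ⊗ M) ⊗ M`. -/
def w2 {M : ModuleCat.{u} K} (σ : M ⊗ M ⟶ M ⊗ M) : (M ⊗ M) ⊗ M ⟶ (M ⊗ M) ⊗ M :=
  (α_ M M M).hom ≫ (M ◁ σ) ≫ (α_ M M M).inv

/-- `m ⊗ id` on `(M ⊗ M) ⊗ M`. -/
def wm1 {M : ModuleCat.{u} K} (mm : M ⊗ M ⟶ M) : (M ⊗ M) ⊗ M ⟶ M ⊗ M := mm ▷ M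

/-- `id ⊗ m` on `(M ⊗ M) ⊗ M`. -/
def wm2 {M : ModuleCat.{u} K} (mm : M ⊗ M ⟶ M) : (M ⊗ M) ⊗ M ⟶ M ⊗ M :=
  (α_ M M M).hom ≫ (M ◁ mm)

/-- the canonical identification `V^{⊗i} ⊗ V^{⊗j} ≅ V^{⊗(i+j)}`. -/
def merge {M : ModuleCat.{u} K} (i : ℕ) : (j : ℕ) → (Tpow M i ⊗ Tpow M j ⟶ Tpow M (i+j))
  | 0 => (ρ_ (Tpow M i)).hom
  | j+1 => (α_ (Tpow M i) (Tpow M j) M).inv ≫ (merge i j ▷ M)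

/-- the product `x₁ · (x₂ · (⋯ · x_r))` of homogeneous elements, for a bilinear
product `μ` on `T(V)` (with empty product the unit `1 ∈ K = V^{⊗0}`). -/
def foldProd {M : ModuleCat.{u} K} (μ : TT M →ₗ[K] TT M →ₗ[K] TT M) :
    List (Σ n : ℕ, ↥(Tpow M n)) → TT M
  | [] => DirectSum.lof K ℕ (fun k => ↥(Tpow M k)) 0 (1 : K)
  | p :: L => μ (DirectSum.lof K ℕ (fun k => ↥(Tpow M k)) p.1 p.2) (foldProd μ L)

/-- the filtration `T(V)^{[<n]} = ⊕_{k<n} V^{⊗k}`. -/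
def filt (M : ModuleCat.{u} K) (n : ℕ) : Submodule K (TT M) :=
  ⨆ k, ⨆ _ : k < n, LinearMap.range (DirectSum.lof K ℕ (fun m => ↥(Tpow M m)) k)

/-!
The two recursions differ only by the term `(⋈ ⊗ m) σ_{i+j-2} ⋯ σ_i`, in which `m` merges two
tensor factors into one, so it has tensor degree at most `i + j - 1`. Double induction on `(i, j)`
shows that `ш_{σ(i,j)}` is homogeneous of degree `i + j`, that `⋈_{σ(i,j)}` lands in degrees
`≤ i + j`, and that their difference lands in degrees `< i + j`. For iterated products one then
inducts on the number of factors, using that left multiplication by a homogeneous element of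
degree `i` raises the filtration degree by at most `i`.
-/

theorem CategoryTheory.MonoidalPreadditive.sub_tensor {C : Type*} [Category* C] [Preadditive C]
    [MonoidalCategory C] [MonoidalPreadditive C] {W X Y Z : C} (f g : W ⟶ X) (h : Y ⟶ Z) :
    (f - g) ⊗ₘ h = f ⊗ₘ h - g ⊗ₘ h := by
  rw [eq_sub_iff_add_eq, ← MonoidalPreadditive.add_tensor, sub_add_cancel]

section Filtration

variable {M : ModuleCat.{u} K}

def gradeT (M : ModuleCat.{u} K) (n : ℕ) : Submodule K (TT M) :=
  LinearMap.range (DirectSum.lof K ℕ (fun m => ↥(Tpow M m)) n)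

lemma lof_mem_gradeT (n : ℕ) (y : ↥(Tpow M n)) :
    DirectSum.lof K ℕ (fun m => ↥(Tpow M m)) n y ∈ gradeT M n :=
  ⟨y, rfl⟩

lemma gradeT_le_filt {k n : ℕ} (h : k < n) : gradeT M k ≤ filt M n :=
  le_iSup₂_of_le (f := fun k (_ : k < n) => gradeT M k) k h le_rfl

lemma filt_le_iff {n : ℕ} {S : Submodule K (TT M)} :
    filt M n ≤ S ↔ ∀ k < n, gradeT M k ≤ S :=
  iSup₂_le_iff

lemma filt_mono : Monotone (filt M) := fun _ _ h =>
  filt_le_iff.2 fun _ hk => gradeT_le_filt (lt_of_lt_of_le hk h)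

lemma lof_mem_filt {k n : ℕ} (h : k < n) (y : ↥(Tpow M k)) :
    DirectSum.lof K ℕ (fun m => ↥(Tpow M m)) k y ∈ filt M n :=
  gradeT_le_filt h (lof_mem_gradeT k y)

lemma concatR_lof (k : ℕ) (y : ↥(Tpow M k)) (v : ↥M) :
    concatR M ((DirectSum.lof K ℕ (fun m => ↥(Tpow M m)) k y : TT M) ⊗ₜ[K] v)
      = DirectSum.lof K ℕ (fun m => ↥(Tpow M m)) (k+1) (y ⊗ₜ[K] v) := by
  unfold concatR
  erw [ModuleCat.ofHom_apply, LinearMap.comp_apply, LinearEquiv.coe_coe,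
    TensorProduct.directSumLeft_tmul_lof]
  exact DirectSum.toModule_lof K
    (φ := fun n => (DirectSum.lof K ℕ (fun m => ↥(Tpow M m)) (n+1) :
      ↥(Tpow M n) ⊗[K] ↥M →ₗ[K] TT M)) k (y ⊗ₜ[K] v)

lemma concatR_tmul_mem_gradeT {n : ℕ} {t : TT M} (ht : t ∈ gradeT M n) (v : ↥M) :
    concatR M (t ⊗ₜ[K] v) ∈ gradeT M (n+1) := by
  obtain ⟨y, rfl⟩ := ht
  erw [concatR_lof]
  exact lof_mem_gradeT _ _

lemma concatR_tmul_mem_filt {n : ℕ} {t : TT M} (ht : t ∈ filt M n) (v : ↥M) :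
    concatR M (t ⊗ₜ[K] v) ∈ filt M (n+1) := by
  let concatV : TT M →ₗ[K] TT M := (concatR M).hom ∘ₗ (TensorProduct.mk K (TT M) M).flip v
  suffices filt M n ≤ (filt M (n+1)).comap concatV from this ht
  refine filt_le_iff.2 fun k hk => ?_
  rintro _ ⟨y, rfl⟩
  change concatR M ((DirectSum.lof K ℕ (fun m => ↥(Tpow M m)) k y : TT M) ⊗ₜ[K] v) ∈ filt M (n+1)
  erw [concatR_lof]
  exact lof_mem_filt (by omega) _

lemma tensorHom_concatR_mem_of_tmul {A B : ModuleCat.{u} K} (f : A ⟶ TTc M) (g : B ⟶ M)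
    {S T : Submodule K (TT M)} (hf : ∀ x, f x ∈ S)
    (hST : ∀ t ∈ S, ∀ v : ↥M, concatR M (t ⊗ₜ[K] v) ∈ T) (z : ↥(A ⊗ B)) :
    ((f ⊗ₘ g) ≫ concatR M) z ∈ T := by
  induction z using TensorProduct.induction_on with
  | zero => rw [map_zero]; exact zero_mem _
  | tmul x y =>
      rw [ModuleCat.comp_apply, ModuleCat.MonoidalCategory.tensorHom_tmul]
      exact hST _ (hf x) _
  | add a b ha hb => rw [map_add]; exact add_mem ha hb

lemma tensorHom_concatR_mem_gradeT {A B : ModuleCat.{u} K} {f : A ⟶ TTc M} (g : B ⟶ M)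
    {n : ℕ} (hf : ∀ x, f x ∈ gradeT M n) (z : ↥(A ⊗ B)) :
    ((f ⊗ₘ g) ≫ concatR M) z ∈ gradeT M (n+1) :=
  tensorHom_concatR_mem_of_tmul f g hf (fun _ ht => concatR_tmul_mem_gradeT ht) z

lemma tensorHom_concatR_mem_filt {A B : ModuleCat.{u} K} {f : A ⟶ TTc M} (g : B ⟶ M)
    {n : ℕ} (hf : ∀ x, f x ∈ filt M n) (z : ↥(A ⊗ B)) :
    ((f ⊗ₘ g) ≫ concatR M) z ∈ filt M (n+1) :=
  tensorHom_concatR_mem_of_tmul f g hf (fun _ ht => concatR_tmul_mem_filt ht) z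

end Filtration

section Components

variable {M : ModuleCat.{u} K}

structure IsQuantumShuffleFamily (σ : M ⊗ M ⟶ M ⊗ M) (Sh : ∀ i j : ℕ, Tpow M (i+j) ⟶ TTc M) :
    Prop where
  apply_zero_right : ∀ i : ℕ, Sh i 0 = iotaT M i
  apply_zero_left : ∀ j : ℕ, Sh 0 j
    = eqToHom (congrArg (Tpow M) (Nat.zero_add j)) ≫ iotaT M j
  apply_succ_succ : ∀ i j : ℕ,
    Sh (i+1) (j+1) =
      (((Sh (i+1) j ⊗ₘ 𝟙 M) ≫ concatR M : Tpow M ((i+1)+(j+1)) ⟶ TTc M)) +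
      (asc σ ((i+1)+(j+1)) (i+1) (j+1) ≫
        eqToHom (congrArg (Tpow M) (Nat.add_right_comm i 1 (j+1)) :
          Tpow M ((i+1)+(j+1)) = Tpow M (i+(j+1)) ⊗ M) ≫
        (Sh i (j+1) ⊗ₘ 𝟙 M) ≫ concatR M)

structure IsQuantumQuasiShuffleFamily (σ : M ⊗ M ⟶ M ⊗ M) (mm : M ⊗ M ⟶ M)
    (J : ∀ i j : ℕ, Tpow M (i+j) ⟶ TTc M) : Prop where
  apply_zero_right : ∀ i : ℕ, J i 0 = iotaT M i
  apply_zero_left : ∀ j : ℕ, J 0 j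
    = eqToHom (congrArg (Tpow M) (Nat.zero_add j)) ≫ iotaT M j
  apply_succ_succ : ∀ i j : ℕ,
    J (i+1) (j+1) =
      (((J (i+1) j ⊗ₘ 𝟙 M) ≫ concatR M : Tpow M ((i+1)+(j+1)) ⟶ TTc M)) +
      (asc σ ((i+1)+(j+1)) (i+1) (j+1) ≫
        eqToHom (congrArg (Tpow M) (Nat.add_right_comm i 1 (j+1)) :
          Tpow M ((i+1)+(j+1)) = Tpow M (i+(j+1)) ⊗ M) ≫
        (J i (j+1) ⊗ₘ 𝟙 M) ≫ concatR M) +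
      (asc σ ((i+1)+(j+1)) (i+1) j ≫
        eqToHom (congrArg (fun n => Tpow M (n+1)) (Nat.add_right_comm i 1 j) :
          Tpow M ((i+1)+(j+1)) = (Tpow M (i+j) ⊗ M) ⊗ M) ≫
        (α_ (Tpow M (i+j)) M M).hom ≫ (J i j ⊗ₘ mm) ≫ concatR M)

variable {σ : M ⊗ M ⟶ M ⊗ M} {mm : M ⊗ M ⟶ M} {J Sh : ∀ i j : ℕ, Tpow M (i+j) ⟶ TTc M}

lemma IsQuantumShuffleFamily.apply_mem_gradeT
    (hSh : IsQuantumShuffleFamily σ Sh) (i j : ℕ) (x : ↥(Tpow M (i+j))) :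
    Sh i j x ∈ gradeT M (i+j) := by
  induction i generalizing j with
  | zero =>
      rw [hSh.apply_zero_left, show gradeT M (0+j) = gradeT M j by rw [Nat.zero_add]]
      exact lof_mem_gradeT _ _
  | succ i ih =>
      induction j with
      | zero => rw [hSh.apply_zero_right]; exact lof_mem_gradeT _ _
      | succ j ihj =>
          rw [hSh.apply_succ_succ]
          simp only [ModuleCat.hom_add, LinearMap.add_apply]
          refine add_mem (tensorHom_concatR_mem_gradeT _ ihj x) ?_
          rw [show gradeT M ((i+1)+(j+1)) = gradeT M (i+(j+1)+1) by congr 1; omega]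
          exact tensorHom_concatR_mem_gradeT _ (ih (j+1)) _

lemma IsQuantumQuasiShuffleFamily.apply_mem_filt
    (hJ : IsQuantumQuasiShuffleFamily σ mm J) (i j : ℕ) (x : ↥(Tpow M (i+j))) :
    J i j x ∈ filt M (i+j+1) := by
  induction i generalizing j with
  | zero => rw [hJ.apply_zero_left]; exact lof_mem_filt (by omega) _
  | succ i ih =>
      induction j with
      | zero => rw [hJ.apply_zero_right]; exact lof_mem_filt (by omega) _
      | succ j ihj =>
          rw [hJ.apply_succ_succ]
          simp only [ModuleCat.hom_add, LinearMap.add_apply]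
          refine add_mem (add_mem (tensorHom_concatR_mem_filt _ ihj x) ?_) ?_
          · exact filt_mono (by omega) (tensorHom_concatR_mem_filt _ (ih (j+1)) _)
          · exact filt_mono (by omega) (tensorHom_concatR_mem_filt mm (ih j) _)

lemma IsQuantumQuasiShuffleFamily.sub_apply_succ_succ (hJ : IsQuantumQuasiShuffleFamily σ mm J)
    (hSh : IsQuantumShuffleFamily σ Sh) (i j : ℕ) :
    J (i+1) (j+1) - Sh (i+1) (j+1) =
      ((((J (i+1) j - Sh (i+1) j) ⊗ₘ 𝟙 M) ≫ concatR M : Tpow M ((i+1)+(j+1)) ⟶ TTc M)) +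
      (asc σ ((i+1)+(j+1)) (i+1) (j+1) ≫
        eqToHom (congrArg (Tpow M) (Nat.add_right_comm i 1 (j+1)) :
          Tpow M ((i+1)+(j+1)) = Tpow M (i+(j+1)) ⊗ M) ≫
        ((J i (j+1) - Sh i (j+1)) ⊗ₘ 𝟙 M) ≫ concatR M) +
      (asc σ ((i+1)+(j+1)) (i+1) j ≫
        eqToHom (congrArg (fun n => Tpow M (n+1)) (Nat.add_right_comm i 1 j) :
          Tpow M ((i+1)+(j+1)) = (Tpow M (i+j) ⊗ M) ⊗ M) ≫
        (α_ (Tpow M (i+j)) M M).hom ≫ (J i j ⊗ₘ mm) ≫ concatR M) := by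
  rw [hJ.apply_succ_succ, hSh.apply_succ_succ, MonoidalPreadditive.sub_tensor,
    MonoidalPreadditive.sub_tensor]
  erw [Preadditive.sub_comp, Preadditive.sub_comp]
  simp only [Preadditive.comp_sub]
  abel

lemma IsQuantumQuasiShuffleFamily.sub_apply_mem_filt (hJ : IsQuantumQuasiShuffleFamily σ mm J)
    (hSh : IsQuantumShuffleFamily σ Sh) (i j : ℕ) (x : ↥(Tpow M (i+j))) :
    (J i j - Sh i j) x ∈ filt M (i+j) := by
  induction i generalizing j with
  | zero =>
      rw [hJ.apply_zero_left, hSh.apply_zero_left, sub_self]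
      exact zero_mem _
  | succ i ih =>
      induction j with
      | zero =>
          rw [hJ.apply_zero_right, hSh.apply_zero_right, sub_self]
          exact zero_mem _
      | succ j ihj =>
          rw [hJ.sub_apply_succ_succ hSh]
          simp only [ModuleCat.hom_add, LinearMap.add_apply]
          refine add_mem (add_mem (tensorHom_concatR_mem_filt _ ihj x) ?_) ?_
          · exact filt_mono (by omega) (tensorHom_concatR_mem_filt _ (ih (j+1)) _)
          · exact filt_mono (by omega) (tensorHom_concatR_mem_filt mm (hJ.apply_mem_filt i j) _)

end Components

section Products

variable {M : ModuleCat.{u} K} {μ ν : TT M →ₗ[K] TT M →ₗ[K] TT M}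

lemma foldProd_mem_gradeT
    (hμ : ∀ (i j : ℕ) (x : ↥(Tpow M i)) (y : ↥(Tpow M j)),
      μ (DirectSum.lof K ℕ (fun k => ↥(Tpow M k)) i x)
        (DirectSum.lof K ℕ (fun k => ↥(Tpow M k)) j y) ∈ gradeT M (i+j))
    (L : List (Σ n : ℕ, ↥(Tpow M n))) :
    foldProd μ L ∈ gradeT M (L.map Sigma.fst).sum := by
  induction L with
  | nil => exact lof_mem_gradeT (M := M) 0 (1 : K)
  | cons p L ih =>
      obtain ⟨y, hy⟩ := ih
      rw [foldProd, ← hy, List.map_cons, List.sum_cons]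
      exact hμ _ _ _ _

lemma lof_mul_mem_filt
    (hν : ∀ (i j : ℕ) (x : ↥(Tpow M i)) (y : ↥(Tpow M j)),
      ν (DirectSum.lof K ℕ (fun k => ↥(Tpow M k)) i x)
        (DirectSum.lof K ℕ (fun k => ↥(Tpow M k)) j y) ∈ filt M (i+j+1))
    {i n : ℕ} (x : ↥(Tpow M i)) {t : TT M} (ht : t ∈ filt M n) :
    ν (DirectSum.lof K ℕ (fun k => ↥(Tpow M k)) i x) t ∈ filt M (i+n) := by
  suffices filt M n ≤ (filt M (i+n)).comap (ν (DirectSum.lof K ℕ _ i x)) from this ht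
  refine filt_le_iff.2 fun k hk => ?_
  rintro _ ⟨y, rfl⟩
  exact filt_mono (by omega) (hν i k x y)

lemma foldProd_sub_mem_filt
    (hν : ∀ (i j : ℕ) (x : ↥(Tpow M i)) (y : ↥(Tpow M j)),
      ν (DirectSum.lof K ℕ (fun k => ↥(Tpow M k)) i x)
        (DirectSum.lof K ℕ (fun k => ↥(Tpow M k)) j y) ∈ filt M (i+j+1))
    (hμ : ∀ (i j : ℕ) (x : ↥(Tpow M i)) (y : ↥(Tpow M j)),
      μ (DirectSum.lof K ℕ (fun k => ↥(Tpow M k)) i x)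
        (DirectSum.lof K ℕ (fun k => ↥(Tpow M k)) j y) ∈ gradeT M (i+j))
    (hνμ : ∀ (i j : ℕ) (x : ↥(Tpow M i)) (y : ↥(Tpow M j)),
      ν (DirectSum.lof K ℕ (fun k => ↥(Tpow M k)) i x)
          (DirectSum.lof K ℕ (fun k => ↥(Tpow M k)) j y)
        - μ (DirectSum.lof K ℕ (fun k => ↥(Tpow M k)) i x)
          (DirectSum.lof K ℕ (fun k => ↥(Tpow M k)) j y) ∈ filt M (i+j))
    (L : List (Σ n : ℕ, ↥(Tpow M n))) :
    foldProd ν L - foldProd μ L ∈ filt M (L.map Sigma.fst).sum := by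
  induction L with
  | nil => erw [foldProd, sub_self]; exact zero_mem _
  | cons p L ih =>
      obtain ⟨y, hy⟩ := foldProd_mem_gradeT hμ L
      set x := DirectSum.lof K ℕ (fun k => ↥(Tpow M k)) p.1 p.2
      have hsplit : foldProd ν (p :: L) - foldProd μ (p :: L)
          = ν x (foldProd ν L - foldProd μ L) + (ν x (foldProd μ L) - μ x (foldProd μ L)) := by
        rw [foldProd, foldProd, map_sub]
        abel
      rw [hsplit, List.map_cons, List.sum_cons]
      refine add_mem (lof_mul_mem_filt hν p.2 ih) ?_
      rw [← hy]
      exact hνμ _ _ _ _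

end Products

theorem stmt15 {M : ModuleCat.{u} K} (σ : M ⊗ M ⟶ M ⊗ M) (mm : M ⊗ M ⟶ M)
    -- `J i j` is the component `⋈_{σ(i,j)}` of the quantum quasi-shuffle product,
    -- characterized by the inductive formula (1):
    (J : ∀ i j : ℕ, (Tpow M (i+j) ⟶ TTc M))
    (hJr : ∀ i : ℕ, J i 0 = iotaT M i)
    (hJl : ∀ j : ℕ, J 0 j
      = eqToHom (show Tpow M (0+j) = Tpow M j by rw [Nat.zero_add]) ≫ iotaT M j)
    (hJrec : ∀ i j : ℕ,
      J (i+1) (j+1) =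
        (((J (i+1) j ⊗ₘ 𝟙 M) ≫ concatR M : Tpow M ((i+1)+(j+1)) ⟶ TTc M)) +
        (asc σ ((i+1)+(j+1)) (i+1) (j+1) ≫
          eqToHom (show Tpow M ((i+1)+(j+1)) = Tpow M (i+(j+1)) ⊗ M by
            rw [show (i+1)+(j+1) = (i+(j+1))+1 by omega]; rfl) ≫
          (J i (j+1) ⊗ₘ 𝟙 M) ≫ concatR M) +
        (asc σ ((i+1)+(j+1)) (i+1) j ≫
          eqToHom (show Tpow M ((i+1)+(j+1)) = (Tpow M (i+j) ⊗ M) ⊗ M by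
            rw [show (i+1)+(j+1) = ((i+j)+1)+1 by omega]; rfl) ≫
          (α_ (Tpow M (i+j)) M M).hom ≫ (J i j ⊗ₘ mm) ≫ concatR M))
    -- `Sh i j` is the component `ш_{σ(i,j)}` of the quantum shuffle product,
    -- characterized by the same inductive formula without the multiplication term:
    (Sh : ∀ i j : ℕ, (Tpow M (i+j) ⟶ TTc M))
    (hSr : ∀ i : ℕ, Sh i 0 = iotaT M i)
    (hSl : ∀ j : ℕ, Sh 0 j
      = eqToHom (show Tpow M (0+j) = Tpow M j by rw [Nat.zero_add]) ≫ iotaT M j)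
    (hSrec : ∀ i j : ℕ,
      Sh (i+1) (j+1) =
        (((Sh (i+1) j ⊗ₘ 𝟙 M) ≫ concatR M : Tpow M ((i+1)+(j+1)) ⟶ TTc M)) +
        (asc σ ((i+1)+(j+1)) (i+1) (j+1) ≫
          eqToHom (show Tpow M ((i+1)+(j+1)) = Tpow M (i+(j+1)) ⊗ M by
            rw [show (i+1)+(j+1) = (i+(j+1))+1 by omega]; rfl) ≫
          (Sh i (j+1) ⊗ₘ 𝟙 M) ≫ concatR M))
    -- `μq` and `μs` are the quantum quasi-shuffle and quantum shuffle products on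
    -- `T(V)`, i.e. the bilinear extensions of the `J i j` and `Sh i j`:
    (μq μs : TT M →ₗ[K] TT M →ₗ[K] TT M)
    (hμq : ∀ (i j : ℕ) (x : ↥(Tpow M i)) (y : ↥(Tpow M j)),
      μq (DirectSum.lof K ℕ (fun k => ↥(Tpow M k)) i x)
          (DirectSum.lof K ℕ (fun k => ↥(Tpow M k)) j y)
        = J i j (merge i j (x ⊗ₜ[K] y)))
    (hμs : ∀ (i j : ℕ) (x : ↥(Tpow M i)) (y : ↥(Tpow M j)),
      μs (DirectSum.lof K ℕ (fun k => ↥(Tpow M k)) i x)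
          (DirectSum.lof K ℕ (fun k => ↥(Tpow M k)) j y)
        = Sh i j (merge i j (x ⊗ₜ[K] y))) :
    -- the quantum shuffle algebra is the associated graded of the quantum
    -- quasi-shuffle algebra: for homogeneous `x_t ∈ V^{⊗ i_t}` (`i_t ≥ 1`),
    -- `x₁ ⋈ ⋯ ⋈ x_r - x₁ ш ⋯ ш x_r ∈ ⊕_{k < i₁ + ⋯ + i_r} V^{⊗k}`.
    ∀ L : List (Σ n : ℕ, ↥(Tpow M n)), L ≠ [] → (∀ p ∈ L, 1 ≤ p.1) →
      foldProd μq L - foldProd μs L ∈ filt M ((L.map Sigma.fst).sum) := by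
  have hJ : IsQuantumQuasiShuffleFamily σ mm J := ⟨hJr, hJl, hJrec⟩
  have hSh : IsQuantumShuffleFamily σ Sh := ⟨hSr, hSl, hSrec⟩
  intro L _ _
  refine foldProd_sub_mem_filt (fun i j x y => ?_) (fun i j x y => ?_) (fun i j x y => ?_) L
  · rw [hμq]
    exact hJ.apply_mem_filt i j _
  · rw [hμs]
    exact hSh.apply_mem_gradeT i j _
  · rw [hμq, hμs]
    exact hJ.sub_apply_mem_filt hSh i j _
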